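/- arXiv:2406.18473 — 10 statements merged into one kernel-verified Lean document; each statement's English description precedes it below -/
import Mathlib

section
/- A nonempty word w is an anti-Lyndon word (i.e., a Lyndon word with respect to the inverse lexicographic order) if and only if w is an unbordered inverse Lyndon word. -/
open List

variable {α : Type*} [LinearOrder α]

/-- `x ≺ y`: lexicographic order on words. -/
def Prec (x y : List α) : Prop := List.Lex (· < ·) x y

/-- Lexicographic order induced by the inverse alphabet order. -/
def PrecIn (x y : List α) : Prop := List.Lex (fun a b : α => b < a) x y

/-- `x ≪ y`: `x ≺ y` and `x` is not a proper prefix of `y`. -/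
def LLt (x y : List α) : Prop := Prec x y ∧ ¬ (x <+: y ∧ x ≠ y)

/-- `b` is a border of `w`: a proper prefix and a suffix of `w`. -/
def IsBorder (b w : List α) : Prop := b <+: w ∧ b ≠ w ∧ b <:+ w

/-- `w` has no nonempty border. -/
def Unbordered (w : List α) : Prop := ∀ b : List α, b ≠ [] → ¬ IsBorder b w

/-- Lyndon word: smaller than each nonempty proper suffix. -/
def IsLyndon (w : List α) : Prop :=
  w ≠ [] ∧ ∀ s : List α, s <:+ w → s ≠ w → s ≠ [] → Prec w s

/-- Anti-Lyndon word: Lyndon w.r.t. the inverse lexicographic order. -/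
def IsAntiLyndon (w : List α) : Prop :=
  w ≠ [] ∧ ∀ s : List α, s <:+ w → s ≠ w → s ≠ [] → PrecIn w s

/-- Inverse Lyndon word: each nonempty proper suffix is smaller. -/
def IsInvLyndon (w : List α) : Prop :=
  w ≠ [] ∧ ∀ s : List α, s <:+ w → s ≠ w → s ≠ [] → Prec s w

/-- Inverse Lyndon factorization of `w`. -/
def IsInvLyndonFact (ms : List (List α)) (w : List α) : Prop :=
  ms ≠ [] ∧ ms.flatten = w ∧ (∀ m ∈ ms, IsInvLyndon m) ∧ List.Chain' LLt ms

/-- The border property of a factorization. -/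
def BorderProp (ms : List (List α)) : Prop :=
  List.Chain' (fun u v => ∀ b : List α, b ≠ [] → IsBorder b u → ¬ b <+: v) ms

/-!
For the inverse alphabet order, `PrecIn w s` says that either `w` is a proper prefix of `s`,
or at the first mismatch `s` has the smaller letter, i.e. `Prec s w` without `s` being a prefix
of `w`; and conversely `Prec s w` means that `s` is a proper prefix of `w` or `PrecIn w s`.
For a nonempty proper suffix `s` of `w`, the word `w` can never be a prefix of `s`, and `s` is a
prefix of `w` exactly when `s` is a border. So `w` is anti-Lyndon iff every such `s` satisfies
`Prec s w` without being a border.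
-/

namespace List

variable {β : Type*} {r : β → β → Prop}

theorem Lex.isPrefix_or_lex_swap {x y : List β} (h : Lex r x y) :
    x <+: y ∨ Lex (fun a b => r b a) y x := by
  induction h with
  | nil => exact Or.inl (nil_prefix ..)
  | rel h => exact Or.inr (Lex.rel h)
  | cons _ ih =>
    rcases ih with ⟨t, rfl⟩ | h
    · exact Or.inl ⟨t, rfl⟩
    · exact Or.inr (Lex.cons h)

theorem IsPrefix.not_lex [Std.Irrefl r] {x y : List β} (hxy : x <+: y) : ¬ Lex r y x := by
  intro h
  induction h with
  | nil => exact absurd (prefix_nil.mp hxy) (cons_ne_nil _ _)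
  | rel h =>
    rw [cons_prefix_cons] at hxy
    exact irrefl _ (hxy.1 ▸ h)
  | cons _ ih => exact ih (cons_prefix_cons.mp hxy).2

end List

theorem prec_of_precIn_of_isSuffix {s w : List α} (hs : s <:+ w) (hne : s ≠ w)
    (h : PrecIn w s) : Prec s w :=
  h.isPrefix_or_lex_swap.resolve_left fun hws => hne (hs.sublist.antisymm hws.sublist)

theorem precIn_of_prec_of_not_isPrefix {s w : List α} (h : Prec s w) (hsw : ¬ s <+: w) :
    PrecIn w s :=
  h.isPrefix_or_lex_swap.resolve_left hsw

theorem not_isPrefix_of_precIn {s w : List α} (h : PrecIn w s) : ¬ s <+: w :=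
  fun hsw => hsw.not_lex h

theorem stmt4_general (w : List α) :
    IsAntiLyndon w ↔ IsInvLyndon w ∧ Unbordered w := by
  constructor
  · rintro ⟨hw, hanti⟩
    refine ⟨⟨hw, fun s hs hne hs₀ => prec_of_precIn_of_isSuffix hs hne (hanti s hs hne hs₀)⟩, ?_⟩
    rintro b hb₀ ⟨hpre, hne, hsuf⟩
    exact not_isPrefix_of_precIn (hanti b hsuf hne hb₀) hpre
  · rintro ⟨⟨hw, hinv⟩, hunb⟩
    refine ⟨hw, fun s hs hne hs₀ => precIn_of_prec_of_not_isPrefix (hinv s hs hne hs₀) ?_⟩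
    exact fun hpre => hunb s hs₀ ⟨hpre, hne, hs⟩

theorem stmt4 (w : List α) (hw : w ≠ []) :
    IsAntiLyndon w ↔ IsInvLyndon w ∧ Unbordered w :=
  stmt4_general w
end

section
/- Every nonempty prefix of an inverse Lyndon word is an inverse Lyndon word. -/
open List

variable {α : Type*} [LinearOrder α]

/-! A nonempty proper suffix `s` of `p` extends to the proper suffix `s ++ t` of `w = p ++ t`,
so `s ++ t ≺ p ++ t`. If `s` is a prefix of `p`, then `s ≺ p` outright; otherwise, as `s` is
shorter than `p`, neither is a prefix of the other, the comparison is decided inside `s`, and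
`s ≺ p` again. -/

section Lex

variable {β : Type*} {r : β → β → Prop}

theorem List.IsPrefix.lex_of_ne {s p : List β} (h : s <+: p) (hne : s ≠ p) : List.Lex r s p := by
  obtain ⟨_ | ⟨c, u⟩, rfl⟩ := h
  · exact absurd (List.append_nil s).symm hne
  · simpa using List.Lex.append_left r (List.Lex.nil : List.Lex r [] (c :: u)) s

theorem List.Lex.of_append_of_not_prefix {s p t u : List β} (h : List.Lex r (s ++ t) (p ++ u))
    (hsp : ¬ s <+: p) (hps : ¬ p <+: s) : List.Lex r s p := by
  induction s generalizing p with
  | nil => exact absurd p.nil_prefix hsp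
  | cons a s ih =>
    cases p with
    | nil => exact absurd (a :: s).nil_prefix hps
    | cons b p =>
      cases h with
      | rel hab => exact .rel hab
      | cons h =>
        simp only [List.cons_prefix_cons, true_and] at hsp hps
        exact .cons (ih h hsp hps)

end Lex

theorem stmt5 (w p : List α) (hw : IsInvLyndon w) (hp : p <+: w) (hpne : p ≠ []) :
    IsInvLyndon p := by
  refine ⟨hpne, fun s hs hsp hsnil => ?_⟩
  by_cases hpre : s <+: p
  · exact hpre.lex_of_ne hsp
  obtain ⟨t, rfl⟩ := hp
  have hlen : s.length < p.length := hs.length_le.lt_of_ne (mt hs.eq_of_length hsp)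
  have hst : Prec (s ++ t) (p ++ t) :=
    hw.2 (s ++ t) (List.suffix_append_self_iff.mpr hs) (mt List.append_cancel_right hsp)
      (List.append_ne_nil_of_left_ne_nil hsnil t)
  exact hst.of_append_of_not_prefix hpre fun hps => hps.length_le.not_gt hlen
end

section
/- Let (m_1, …, m_k) be an inverse Lyndon factorization of a nonempty word w that has the border property. If α is a nonempty border of m_j for some 1 ≤ j ≤ k−1, then there exists a nonempty prefix β of m_{j+1} with |β| ≤ |α| and α ≪ β. -/
/-
Since `m_j ≪ m_{j+1}`, the two words agree up to a common prefix `p` and then differ in letters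
`c < d`. The border `a` is a prefix of `m_j` that, by the border property, is not a prefix of
`m_{j+1}`; hence it is longer than `p` and starts with `p c`. Then `b = p d` works.
-/

open List

variable {α : Type*} [LinearOrder α]

theorem List.Lex.prefix_or_exists_mismatch {γ : Type*} {r : γ → γ → Prop} {x y : List γ}
    (h : Lex r x y) :
    x <+: y ∨ ∃ p c d u v, x = p ++ c :: u ∧ y = p ++ d :: v ∧ r c d := by
  induction h with
  | nil => exact Or.inl nil_prefix
  | @cons a _ _ _ ih =>
    rcases ih with hpre | ⟨p, c, d, u, v, rfl, rfl, hcd⟩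
    · exact Or.inl (cons_prefix_cons.mpr ⟨rfl, hpre⟩)
    · exact Or.inr ⟨a :: p, c, d, u, v, rfl, rfl, hcd⟩
  | @rel c u d v hcd => exact Or.inr ⟨[], c, d, u, v, rfl, rfl, hcd⟩

theorem LLt.exists_mismatch {x y : List α} (h : LLt x y) :
    ∃ p c d u v, x = p ++ c :: u ∧ y = p ++ d :: v ∧ c < d := by
  obtain ⟨hprec, hnot⟩ := h
  refine hprec.prefix_or_exists_mismatch.resolve_left fun hpre => hnot ⟨hpre, ?_⟩
  rintro rfl
  exact lex_irrefl (fun c => lt_irrefl c) x hprec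

theorem LLt.exists_prefix_llt_of_prefix {x y a : List α} (hxy : LLt x y) (hax : a <+: x)
    (hay : ¬ a <+: y) : ∃ b, b ≠ [] ∧ b <+: y ∧ b.length ≤ a.length ∧ LLt a b := by
  obtain ⟨p, c, d, u, v, rfl, rfl, hcd⟩ := hxy.exists_mismatch
  have hp : p.length < a.length := by
    by_contra! hle
    exact hay ((prefix_of_prefix_length_le hax (prefix_append p _) hle).trans (prefix_append _ _))
  obtain ⟨u', rfl⟩ : p ++ [c] <+: a :=
    prefix_of_prefix_length_le (by simp) hax (by simpa using hp)
  refine ⟨p ++ [d], by simp, by simp, by simp, ?_, ?_⟩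
  · simpa only [Prec, append_assoc, singleton_append] using Lex.append_left _ (Lex.rel hcd) p
  · rintro ⟨hpre, hne⟩
    exact hne (hpre.eq_of_length_le (by simp))

theorem stmt6 (w : List α) (ms : List (List α))
    (hf : IsInvLyndonFact ms w) (hb : BorderProp ms)
    (j : ℕ) (hj : j + 1 < ms.length)
    (a : List α) (ha : a ≠ []) (hab : IsBorder a (ms[j]'(Nat.lt_of_succ_lt hj))) :
    ∃ b : List α, b ≠ [] ∧ b <+: ms[j+1]'hj ∧ b.length ≤ a.length ∧ LLt a b := by
  have hll : LLt ms[j] ms[j+1] := IsChain.getElem hf.2.2.2 j hj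
  have hnot : ¬ a <+: ms[j+1] := IsChain.getElem hb j hj a ha hab
  exact hll.exists_prefix_llt_of_prefix hab.1 hnot
end

section
/- Every nonempty word w has at most one inverse Lyndon factorization with the border property: if (f_1, …, f_k) and (f'_1, …, f'_v) are both inverse Lyndon factorizations of w having the border property, then k = v and f_i = f'_i for all i. -/
open List

variable {α : Type*} [LinearOrder α]

/-!
Suppose the first factors of two such factorizations of `w` are `m` and `m ++ q` with `q ≠ []`,
and let `v` be the second factor of the first one, so `m ≪ v`. Since `q` and `v` are prefixes of
the same word, either `m ≪ q`, impossible because then `m ++ q ≺ q ≺ m ++ q` (the second step as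
`m ++ q` is inverse Lyndon), or `q` is a prefix of the common part of `m` and `v`. Then `q` is a
border of `m ++ q`, so by the border property it is not a prefix of the next factor `g` of the
second factorization, and `m ++ q ≪ g` yields `q ≪ g`. This is the same configuration with the
two factorizations exchanged and `m` replaced by the strictly shorter `q`, so the descent ends
in a contradiction.
-/

theorem Prec.asymm {x y : List α} (h : Prec x y) : ¬ Prec y x :=
  List.lex_asymm (fun hab hba => lt_asymm hab hba) h

theorem Prec.prefix_or_exists {x y : List α} (h : Prec x y) :
    x <+: y ∨ ∃ (r : List α) (a b : α), a < b ∧ r ++ [a] <+: x ∧ r ++ [b] <+: y := by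
  induction h with
  | nil => exact .inl List.nil_prefix
  | @rel a s b t hab => exact .inr ⟨[], a, b, hab, ⟨s, rfl⟩, ⟨t, rfl⟩⟩
  | @cons c s t _ ih =>
    rcases ih with hst | ⟨r, a, b, hab, ha, hb⟩
    · exact .inl (List.cons_prefix_cons.mpr ⟨rfl, hst⟩)
    · exact .inr ⟨c :: r, a, b, hab, List.cons_prefix_cons.mpr ⟨rfl, ha⟩,
        List.cons_prefix_cons.mpr ⟨rfl, hb⟩⟩

theorem llt_iff_exists {x y : List α} :
    LLt x y ↔ ∃ (r : List α) (a b : α), a < b ∧ r ++ [a] <+: x ∧ r ++ [b] <+: y := by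
  constructor
  · rintro ⟨hxy, hnp⟩
    refine hxy.prefix_or_exists.resolve_left fun hp => hnp ⟨hp, ?_⟩
    rintro rfl
    exact List.lt_irrefl x hxy
  · rintro ⟨r, a, b, hab, ⟨s, rfl⟩, ⟨t, rfl⟩⟩
    simp only [List.append_assoc, List.singleton_append]
    refine ⟨List.append_left_lt (List.Lex.rel hab), fun ⟨hp, _⟩ => ?_⟩
    rw [List.prefix_append_right_inj, List.cons_prefix_cons] at hp
    exact hab.ne hp.1

theorem LLt.ne_nil_left {u v : List α} (h : LLt u v) : u ≠ [] := by
  obtain ⟨r, a, b, -, ha, -⟩ := llt_iff_exists.mp h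
  rintro rfl
  simpa using ha.length_le

theorem LLt.not_prefix {u v : List α} (h : LLt u v) : ¬ u <+: v := fun hp =>
  h.2 ⟨hp, by rintro rfl; exact List.lt_irrefl u h.1⟩

theorem LLt.not_prefix_left {u v : List α} (h : LLt u v) : ¬ v <+: u := by
  obtain ⟨r, a, b, hab, ha, hb⟩ := llt_iff_exists.mp h
  intro hvu
  have : r ++ [b] <+: r ++ [a] := List.prefix_of_prefix_length_le (hb.trans hvu) ha (by simp)
  simp [hab.ne'] at this

theorem LLt.prec_append_left {u v : List α} (h : LLt u v) (z : List α) : Prec (u ++ z) v := by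
  obtain ⟨r, a, b, hab, ⟨s, rfl⟩, ⟨t, rfl⟩⟩ := llt_iff_exists.mp h
  simp only [List.append_assoc, List.cons_append]
  exact List.append_left_lt (List.Lex.rel hab)

theorem IsInvLyndon.not_llt_of_append {u q : List α} (h : IsInvLyndon (u ++ q)) (hq : q ≠ []) :
    ¬ LLt u q := fun huq => by
  have hne : q ≠ u ++ q := fun heq => huq.ne_nil_left (by simpa using congrArg List.length heq)
  exact (h.2 q (List.suffix_append u q) hne hq).asymm (huq.prec_append_left q)

theorem LLt.llt_or_prefix {u v q x : List α} (h : LLt u v) (hv : v <+: x) (hq : q <+: x) :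
    LLt u q ∨ (q <+: u ∧ q <+: v) := by
  obtain ⟨r, a, b, hab, ha, hb⟩ := llt_iff_exists.mp h
  rcases lt_or_ge r.length q.length with hlt | hle
  · exact .inl (llt_iff_exists.mpr
      ⟨r, a, b, hab, ha, List.prefix_of_prefix_length_le (hb.trans hv) hq (by simpa using hlt)⟩)
  · have hqr : q <+: r := List.prefix_of_prefix_length_le
      (List.prefix_of_prefix_length_le hq (hb.trans hv) (by simp; omega)) (List.prefix_append _ _) hle
    exact .inr ⟨hqr.trans ((List.prefix_append _ _).trans ha),
      hqr.trans ((List.prefix_append _ _).trans hb)⟩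

theorem LLt.of_prefix_of_not_prefix {p q g : List α} (hpg : LLt p g) (hqp : q <+: p)
    (hqg : ¬ q <+: g) : LLt q g := by
  obtain ⟨r, a, b, hab, ha, hb⟩ := llt_iff_exists.mp hpg
  rcases le_or_gt q.length r.length with hle | hlt
  · exact absurd ((List.prefix_of_prefix_length_le hqp ((List.prefix_append _ _).trans ha) hle).trans
      ((List.prefix_append _ _).trans hb)) hqg
  · exact llt_iff_exists.mpr
      ⟨r, a, b, hab, List.prefix_of_prefix_length_le ha hqp (by simpa using hlt), hb⟩

def IsInvLyndonBorderSeq (ms : List (List α)) : Prop :=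
  (∀ m ∈ ms, IsInvLyndon m) ∧ ms.IsChain LLt ∧ BorderProp ms

namespace IsInvLyndonBorderSeq

variable {m g : List α} {ms : List (List α)}

theorem head (h : IsInvLyndonBorderSeq (m :: ms)) : IsInvLyndon m :=
  h.1 m List.mem_cons_self

theorem tail (h : IsInvLyndonBorderSeq (m :: ms)) : IsInvLyndonBorderSeq ms :=
  ⟨fun x hx => h.1 x (List.mem_cons_of_mem m hx), h.2.1.tail, h.2.2.tail⟩

theorem llt (h : IsInvLyndonBorderSeq (m :: g :: ms)) : LLt m g :=
  (List.isChain_cons_cons.mp h.2.1).1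

theorem not_prefix_of_border (h : IsInvLyndonBorderSeq (m :: g :: ms)) {b : List α}
    (hb : b ≠ []) (hbm : IsBorder b m) : ¬ b <+: g :=
  (List.isChain_cons_cons.mp h.2.2).1 b hb hbm

theorem flatten_eq_nil_iff (h : IsInvLyndonBorderSeq ms) : ms.flatten = [] ↔ ms = [] := by
  refine ⟨fun hms => ?_, fun hms => hms ▸ rfl⟩
  cases ms with
  | nil => rfl
  | cons m ms => exact absurd (List.flatten_eq_nil_iff.mp hms m List.mem_cons_self) h.head.1

theorem not_llt_of_overlap (u q v : List α) (G H : List (List α))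
    (hG : IsInvLyndonBorderSeq ((u ++ q) :: G)) (hH : IsInvLyndonBorderSeq (v :: H))
    (hq : q ≠ []) (hjoin : q ++ G.flatten = v ++ H.flatten) : ¬ LLt u v := by
  intro huv
  rcases huv.llt_or_prefix (hjoin ▸ List.prefix_append v H.flatten)
      (List.prefix_append q G.flatten) with huq | ⟨hqu, hqv⟩
  · exact hG.head.not_llt_of_append hq huq
  have hqu_lt : q.length < u.length :=
    lt_of_le_of_ne hqu.length_le fun hl => huv.not_prefix (hqu.eq_of_length hl ▸ hqv)
  obtain ⟨v', rfl⟩ := hqv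
  have hv' : v' ≠ [] := by
    rintro rfl
    exact huv.not_prefix_left (by simpa using hqu)
  have hGflat : G.flatten = v' ++ H.flatten := by simpa using hjoin
  obtain ⟨g, G', rfl⟩ : ∃ g G', G = g :: G' := by
    cases G with
    | nil => simp [hv'] at hGflat
    | cons g G' => exact ⟨g, G', rfl⟩
  have hborder : IsBorder q (u ++ q) :=
    ⟨hqu.trans (List.prefix_append u q),
      fun heq => by simpa [huv.ne_nil_left] using congrArg List.length heq,
      List.suffix_append u q⟩
  have hqg : LLt q g :=
    hG.llt.of_prefix_of_not_prefix (hqu.trans (List.prefix_append u q))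
      (hG.not_prefix_of_border hq hborder)
  exact not_llt_of_overlap q v' g H G' hH hG.tail hv' (by simpa using hGflat.symm) hqg
termination_by u.length

theorem not_append_head (hF : IsInvLyndonBorderSeq (m :: ms))
    {q : List α} {ms' : List (List α)} (hF' : IsInvLyndonBorderSeq ((m ++ q) :: ms'))
    (hq : q ≠ []) (hjoin : m ++ ms.flatten = m ++ q ++ ms'.flatten) : False := by
  cases ms with
  | nil => simp [hq] at hjoin
  | cons m₂ ms =>
    exact not_llt_of_overlap m q m₂ ms' ms hF' hF.tail hq (by simpa using hjoin.symm) hF.llt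

theorem head_eq {m' : List α} {ms' : List (List α)} (hF : IsInvLyndonBorderSeq (m :: ms))
    (hF' : IsInvLyndonBorderSeq (m' :: ms')) (hjoin : m ++ ms.flatten = m' ++ ms'.flatten) :
    m = m' := by
  wlog hpre : m <+: m' generalizing m m' ms ms'
  · exact (this hF' hF hjoin.symm <| (List.prefix_or_prefix_of_prefix (List.prefix_append m _)
      (hjoin ▸ List.prefix_append m' _)).resolve_left hpre).symm
  obtain ⟨q, rfl⟩ := hpre
  by_cases hq : q = []
  · simp [hq]
  · exact (hF.not_append_head hF' hq (by simpa using hjoin)).elim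

theorem eq_of_flatten_eq {ms' : List (List α)} (hF : IsInvLyndonBorderSeq ms)
    (hF' : IsInvLyndonBorderSeq ms') (hflat : ms.flatten = ms'.flatten) : ms = ms' := by
  induction ms generalizing ms' with
  | nil => exact (hF'.flatten_eq_nil_iff.mp hflat.symm).symm
  | cons m ms ih =>
    cases ms' with
    | nil => exact hF.flatten_eq_nil_iff.mp hflat
    | cons m' ms' =>
      obtain rfl := hF.head_eq hF' (by simpa using hflat)
      rw [ih hF.tail hF'.tail (by simpa using hflat)]

end IsInvLyndonBorderSeq

theorem stmt7_general (w : List α) (f1 f2 : List (List α))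
    (h1 : IsInvLyndonFact f1 w) (hb1 : BorderProp f1)
    (h2 : IsInvLyndonFact f2 w) (hb2 : BorderProp f2) :
    f1 = f2 :=
  IsInvLyndonBorderSeq.eq_of_flatten_eq ⟨h1.2.2.1, h1.2.2.2, hb1⟩ ⟨h2.2.2.1, h2.2.2.2, hb2⟩
    (h1.2.1.trans h2.2.1.symm)

theorem stmt7 (w : List α) (hw : w ≠ []) (f1 f2 : List (List α))
    (h1 : IsInvLyndonFact f1 w) (hb1 : BorderProp f1)
    (h2 : IsInvLyndonFact f2 w) (hb2 : BorderProp f2) :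
    f1 = f2 :=
  stmt7_general w f1 f2 h1 hb1 h2 hb2
end

section
/- Let ℓ_1, …, ℓ_h be anti-Lyndon words forming a non-increasing chain for the prefix order (ℓ_1 ≥_p ℓ_2 ≥_p … ≥_p ℓ_h, where x ≥_p y means y is a prefix of x). If ℓ_1 ≠ ℓ_2, then ℓ_1 is not a proper prefix of the concatenation ℓ_2 ⋯ ℓ_h. -/
open List

variable {α : Type*} [LinearOrder α]

/-!
Write `ℓ₁ = ℓ₂ t` with `t ≠ []`. If `ℓ₁` were a proper prefix of `ℓ₂ ℓ₃ ⋯ ℓₕ`, then `t` would be a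
prefix of `ℓ₃ ⋯ ℓₕ`, a product of prefixes of `ℓ₁`, so some nonempty suffix of `t` would be a
prefix of `ℓ₁`, i.e. a border of `ℓ₁`. But anti-Lyndon words are unbordered.
-/

theorem List.not_lex_of_isPrefix {β : Type*} {r : β → β → Prop} (hr : ∀ a, ¬ r a a) :
    ∀ {u w : List β}, u <+: w → ¬ List.Lex r w u
  | [], _, _, h => List.not_lex_nil h
  | a :: u, _, ⟨v, rfl⟩, .cons h => List.not_lex_of_isPrefix hr ⟨v, rfl⟩ h
  | a :: _, _, ⟨_, rfl⟩, .rel h => hr a h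

theorem IsAntiLyndon.unbordered {w : List α} (hw : IsAntiLyndon w) : Unbordered w :=
  fun b hb ⟨hpre, hne, hsuf⟩ =>
    List.not_lex_of_isPrefix (r := fun a b => b < a) lt_irrefl hpre (hw.2 b hsuf hne hb)

theorem exists_suffix_prefix_of_prefix_flatten {β : Type*} {w : List β} :
    ∀ {ms : List (List β)} {t : List β}, (∀ m ∈ ms, m <+: w) → t ≠ [] → t <+: ms.flatten →
      ∃ s, s ≠ [] ∧ s <:+ t ∧ s <+: w
  | [], t, _, ht, htms => absurd (List.prefix_nil.mp htms) ht
  | m :: ms, t, hms, ht, htms => by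
    rw [List.flatten_cons] at htms
    rcases List.prefix_or_prefix_of_prefix htms (List.prefix_append m ms.flatten)
      with htm | ⟨t', rfl⟩
    · exact ⟨t, ht, List.suffix_refl t, htm.trans (hms m List.mem_cons_self)⟩
    · rcases eq_or_ne t' [] with rfl | ht'
      · exact ⟨m, by simpa using ht, by simp, by simpa using hms m List.mem_cons_self⟩
      · obtain ⟨s, hs, hst', hsw⟩ := exists_suffix_prefix_of_prefix_flatten
          (fun x hx => hms x (List.mem_cons_of_mem m hx)) ht'
          ((List.prefix_append_right_inj m).mp htms)
        exact ⟨s, hs, hst'.trans (List.suffix_append m t'), hsw⟩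

theorem stmt8 (l1 l2 : List α) (rest : List (List α))
    (hanti : ∀ m ∈ l1 :: l2 :: rest, IsAntiLyndon m)
    (hchain : List.Chain' (fun x y : List α => y <+: x) (l1 :: l2 :: rest))
    (hne : l1 ≠ l2) :
    ¬ (l1 <+: (l2 :: rest).flatten ∧ l1 ≠ (l2 :: rest).flatten) := by
  rintro ⟨hpre, -⟩
  obtain ⟨t, rfl⟩ : l2 <+: l1 := hchain.rel
  have ht : t ≠ [] := by rintro rfl; simp at hne
  have hrest : ∀ m ∈ rest, m <+: l2 ++ t := by
    have : Trans (fun x y : List α => y <+: x) (fun x y => y <+: x) (fun x y => y <+: x) :=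
      ⟨fun hab hbc => hbc.trans hab⟩
    exact fun m hm => hchain.rel_cons (List.mem_cons_of_mem l2 hm)
  have htrest : t <+: rest.flatten := by simpa using hpre
  obtain ⟨s, hs, hst, hsl⟩ := exists_suffix_prefix_of_prefix_flatten hrest ht htrest
  have hlen : s.length < (l2 ++ t).length := by
    have := hst.length_le
    have := List.length_pos_iff.mpr (hanti l2 (by simp)).1
    simp only [List.length_append]; omega
  exact (hanti _ List.mem_cons_self).unbordered s hs
    ⟨hsl, fun h => hlen.ne (congrArg List.length h), hst.trans (List.suffix_append l2 t)⟩
end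

section
/- Let w be an inverse Lyndon word and ℓ an anti-Lyndon word. If ℓ ≪ w, then for every k ≥ 1 the word ℓ^k w is not an inverse Lyndon word. -/
open List

variable {α : Type*} [LinearOrder α]

/-
Proof idea: since `ℓ ≪ w`, `ℓ` is not a prefix of `w`, so `ℓ ≺ w` is decided at a letter
within `ℓ` and stays true after appending anything to `ℓ`; hence `ℓ^k w ≺ w`. But `w` is a
nonempty proper suffix of `ℓ^k w`, so an inverse Lyndon `ℓ^k w` would satisfy `w ≺ ℓ^k w`.
-/

theorem List.Lex.append_of_not_isPrefix {β : Type*} {r : β → β → Prop} {x y : List β}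
    (h : List.Lex r x y) (hxy : ¬ x <+: y) (z : List β) : List.Lex r (x ++ z) y := by
  induction h with
  | nil => exact absurd List.nil_prefix hxy
  | cons _ ih => exact .cons (ih fun hp => hxy (List.cons_prefix_cons.mpr ⟨rfl, hp⟩))
  | rel hab => exact .rel hab

theorem prec_irrefl (x : List α) : ¬ Prec x x :=
  Std.Irrefl.irrefl (r := List.Lex (· < ·)) x

theorem LLt.prec_append {x y : List α} (h : LLt x y) (z : List α) : Prec (x ++ z) y := by
  have hne : x ≠ y := fun hxy => prec_irrefl y (hxy ▸ h.1)
  exact h.1.append_of_not_isPrefix (fun hp => h.2 ⟨hp, hne⟩) z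

theorem not_isInvLyndon_of_prec_suffix {u w : List α} (h : Prec (u ++ w) w) :
    ¬ IsInvLyndon (u ++ w) := by
  intro hinv
  have hne : w ≠ u ++ w := by
    intro heq
    rw [← heq] at h
    exact prec_irrefl w h
  have hw : w ≠ [] := by
    rintro rfl
    exact List.not_lex_nil h
  exact h.asymm (hinv.2 w (List.suffix_append u w) hne hw)

theorem stmt10_general (w l : List α)
    (h : LLt l w) :
    ∀ k : ℕ, 1 ≤ k → ¬ IsInvLyndon ((List.replicate k l).flatten ++ w) := by
  rintro (_ | n) hk
  · omega
  have hsplit : (List.replicate (n + 1) l).flatten ++ w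
      = l ++ (List.replicate n l).flatten ++ w := by
    simp [List.replicate_succ]
  rw [hsplit]
  exact not_isInvLyndon_of_prec_suffix (by rw [List.append_assoc]; exact h.prec_append _)

theorem stmt10 (w l : List α) (hw : IsInvLyndon w) (hl : IsAntiLyndon l)
    (h : LLt l w) :
    ∀ k : ℕ, 1 ≤ k → ¬ IsInvLyndon ((List.replicate k l).flatten ++ w) :=
  stmt10_general w l h
end

section
/- Let w be an inverse Lyndon word and ℓ a nonempty anti-Lyndon word. If ℓw is not an inverse Lyndon word, then ℓ ≪ w. -/
open List

variable {α : Type*} [LinearOrder α]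

/-!
A suffix witnessing that `ℓw` is not inverse Lyndon cannot start strictly inside `ℓ`: for a
nonempty proper suffix `s'` of `ℓ`, the anti-Lyndon property makes the longer word `ℓ` and `s'`
differ at a position where `ℓ` has the larger letter, so `s'w ≺ ℓw`. Hence the witness is `w` or a
suffix of `w`, and either way `ℓw ≺ w` because `w` is inverse Lyndon. Finally `ℓ` cannot be a
prefix of `w = ℓu`, since `ℓw ≺ w` would cancel to `w ≺ u`, against `u ≺ w`; so `ℓ ≪ w`.
-/

namespace List.Lex

variable {β : Type*} {r : β → β → Prop}

theorem swap_append_of_not_prefix {x y : List β} (h : Lex r x y) (hp : ¬ x <+: y)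
    (u v : List β) : Lex (flip r) (y ++ v) (x ++ u) := by
  induction h with
  | nil => exact absurd nil_prefix hp
  | cons _ ih => exact .cons (ih fun hx => hp (cons_prefix_cons.mpr ⟨rfl, hx⟩))
  | rel hab => exact .rel hab

theorem of_append_of_not_prefix_s11 {x u y : List β} (h : Lex r (x ++ u) y) (hp : ¬ x <+: y) :
    Lex r x y := by
  induction x generalizing y with
  | nil => exact absurd nil_prefix hp
  | cons a x ih =>
    cases h with
    | cons h => exact .cons (ih h fun hx => hp (cons_prefix_cons.mpr ⟨rfl, hx⟩))
    | rel hab => exact .rel hab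

end List.Lex

theorem List.lt_of_append_lt_append_left {p x y : List α} (h : p ++ x < p ++ y) : x < y := by
  induction p with
  | nil => exact h
  | cons a p ih => exact ih (cons_lt_cons_self.mp h)

theorem append_lt_append_of_isAntiLyndon {l s : List α} (hl : IsAntiLyndon l) (hs : s <:+ l)
    (hsl : s ≠ l) (hs0 : s ≠ []) (w : List α) : s ++ w < l ++ w := by
  have hls : ¬ l <+: s := fun hp =>
    hsl (hs.eq_of_length (le_antisymm hs.length_le hp.length_le))
  exact List.Lex.swap_append_of_not_prefix (hl.2 s hs hsl hs0) hls w w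

theorem exists_suffix_gt_of_not_isInvLyndon {v : List α} (hv : v ≠ []) (h : ¬ IsInvLyndon v) :
    ∃ s, s <:+ v ∧ s ≠ v ∧ s ≠ [] ∧ v < s := by
  by_contra! hc
  exact h ⟨hv, fun s hs hsv hs0 => lt_of_le_of_ne (hc s hs hsv hs0) hsv⟩

theorem append_lt_of_not_isInvLyndon {l w : List α} (hw : IsInvLyndon w) (hl : IsAntiLyndon l)
    (h : ¬ IsInvLyndon (l ++ w)) : l ++ w < w := by
  obtain ⟨s, hs, hsv, hs0, hvs⟩ :=
    exists_suffix_gt_of_not_isInvLyndon (append_ne_nil_of_right_ne_nil l hw.1) h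
  rcases suffix_or_suffix_of_suffix hs (suffix_append l w) with hsw | ⟨s', rfl⟩
  · rcases eq_or_ne s w with rfl | hsw'
    · exact hvs
    · exact hvs.trans (hw.2 s hsw hsw' hs0)
  · have hs' : s' <:+ l := suffix_append_self_iff.mp hs
    rcases eq_or_ne s' [] with rfl | hs'0
    · exact hvs
    have hs'l : s' ≠ l := by rintro rfl; exact hsv rfl
    exact absurd (append_lt_append_of_isAntiLyndon hl hs' hs'l hs'0 w) hvs.asymm

theorem llt_of_append_lt {l w : List α} (hw : IsInvLyndon w) (h : l ++ w < w) : LLt l w := by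
  have hlw : ¬ l <+: w := by
    rintro ⟨u, rfl⟩
    have hwu : l ++ u < u := lt_of_append_lt_append_left h
    have hu : u ≠ l ++ u := by
      intro he
      rw [← he] at hwu
      exact lt_irrefl u hwu
    have hu0 : u ≠ [] := by rintro rfl; exact List.not_lt_nil _ hwu
    exact hwu.asymm (hw.2 u (suffix_append l u) hu hu0)
  exact ⟨List.Lex.of_append_of_not_prefix_s11 h hlw, fun hp => hlw hp.1⟩

theorem stmt11_general (w l : List α) (hw : IsInvLyndon w)
    (hl : IsAntiLyndon l) (h : ¬ IsInvLyndon (l ++ w)) : LLt l w :=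
  llt_of_append_lt hw (append_lt_of_not_isInvLyndon hw hl h)

theorem stmt11 (w l : List α) (hw : IsInvLyndon w) (hlne : l ≠ [])
    (hl : IsAntiLyndon l) (h : ¬ IsInvLyndon (l ++ w)) : LLt l w :=
  stmt11_general w l hw hl h
end

section
/- Let (m_1, …, m_k) be the (unique) inverse Lyndon factorization with the border property of a nonempty word w. Then the last factor m_k is the longest suffix of w which is an inverse Lyndon word. -/
open List

variable {α : Type*} [LinearOrder α]

/- If `s` is an inverse Lyndon suffix of `m₁ ⋯ mₖ` that is longer than the suffix
`v = m_{i+1} ⋯ mₖ`, then `s = u v` with `u` a nonempty suffix of `m_i`. Such a `u` satisfies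
`u ≼ m_i ≺ m_{i+1}` and is not a prefix of `m_{i+1}`: if it is a prefix of `m_i` it is a border
(border property), otherwise `u ≪ m_i ≺ m_{i+1}` forbids it. So `u ≪ m_{i+1}`,
whence `u v ≺ v` although `v` is a proper suffix of the inverse Lyndon word `u v`.
Hence every inverse Lyndon suffix of `w` is already a suffix of `mₖ`. -/

theorem lex_append_of_not_prefix {β : Type*} {r : β → β → Prop} {x y : List β}
    (h : List.Lex r x y) (hxy : ¬ x <+: y) (a b : List β) : List.Lex r (x ++ a) (y ++ b) := by
  induction h with
  | nil => exact absurd nil_prefix hxy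
  | cons _ ih => exact .cons (ih fun h => hxy (cons_prefix_cons.2 ⟨rfl, h⟩))
  | rel hab => exact .rel hab

theorem llt_iff {x y : List α} : LLt x y ↔ x < y ∧ ¬ x <+: y :=
  and_congr_right fun hxy => not_congr ⟨And.left, fun h => ⟨h, ne_of_lt hxy⟩⟩

theorem LLt.append_lt_append {x y : List α} (h : LLt x y) (a b : List α) : x ++ a < y ++ b :=
  lex_append_of_not_prefix (llt_iff.1 h).1 (llt_iff.1 h).2 a b

theorem LLt.not_prefix_of_lt {x y z : List α} (hxy : LLt x y) (hyz : y < z) : ¬ x <+: z := by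
  rintro ⟨a, rfl⟩
  exact List.lt_asymm hyz (by simpa using hxy.append_lt_append a [])

theorem IsInvLyndon.lt_of_append {u v : List α} (h : IsInvLyndon (u ++ v)) (hu : u ≠ [])
    (hv : v ≠ []) : v < u ++ v :=
  h.2 v (suffix_append u v) (fun huv => hu (by simpa using congrArg length huv)) hv

theorem IsInvLyndon.llt_of_suffix {m m' u : List α} (hm : IsInvLyndon m) (hmm' : LLt m m')
    (hbp : ∀ b : List α, b ≠ [] → IsBorder b m → ¬ b <+: m') (hu : u <:+ m) (hune : u ≠ []) :
    LLt u m' := by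
  have hmm'_lt : m < m' := (llt_iff.1 hmm').1
  by_cases hum : u = m
  · exact hum ▸ hmm'
  have hum_lt : u < m := hm.2 u hu hum hune
  refine llt_iff.2 ⟨List.lt_trans hum_lt hmm'_lt, fun hum' => ?_⟩
  by_cases hpre : u <+: m
  · exact hbp u hune ⟨hpre, hum, hu⟩ hum'
  · exact (llt_iff.2 ⟨hum_lt, hpre⟩).not_prefix_of_lt hmm'_lt hum'

theorem not_isInvLyndon_append_of_llt {u v m : List α} (hum : LLt u m) (hmv : m <+: v)
    (hu : u ≠ []) : ¬ IsInvLyndon (u ++ v) := by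
  obtain ⟨t, rfl⟩ := hmv
  intro h
  have hm : m ≠ [] := by rintro rfl; exact List.not_lt_nil u (llt_iff.1 hum).1
  exact List.lt_asymm (hum.append_lt_append (m ++ t) t) (h.lt_of_append hu (by simp [hm]))

theorem suffix_getLast_of_isInvLyndon_suffix_flatten :
    ∀ (ms : List (List α)) (hne : ms ≠ []), (∀ m ∈ ms, IsInvLyndon m) → ms.IsChain LLt →
      BorderProp ms → ∀ s : List α, s <:+ ms.flatten → IsInvLyndon s → s <:+ ms.getLast hne
  | [m], _, _, _, _, s, hs, _ => by simpa using hs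
  | m :: m' :: r, _, hinv, hch, hbp, s, hs, hs_inv => by
    rw [getLast_cons (cons_ne_nil m' r)]
    have ih := suffix_getLast_of_isInvLyndon_suffix_flatten (m' :: r) (cons_ne_nil m' r)
      (fun x hx => hinv x (mem_cons_of_mem m hx)) hch.tail hbp.tail s
    rw [flatten_cons] at hs
    rcases suffix_or_suffix_of_suffix hs (suffix_append m _) with hsv | ⟨u, rfl⟩
    · exact ih hsv hs_inv
    by_cases hu : u = []
    · subst hu
      exact ih suffix_rfl hs_inv
    exact absurd hs_inv <| not_isInvLyndon_append_of_llt
      ((hinv m mem_cons_self).llt_of_suffix (isChain_cons_cons.1 hch).1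
        (isChain_cons_cons.1 hbp).1 (suffix_append_self_iff.1 hs) hu)
      (prefix_append m' r.flatten) hu

theorem getLast_suffix_flatten {β : Type*} (ms : List (List β)) (hne : ms ≠ []) :
    ms.getLast hne <:+ ms.flatten := by
  conv_rhs => rw [← dropLast_append_getLast hne]
  simp

theorem stmt13_general (w : List α) (ms : List (List α))
    (hf : IsInvLyndonFact ms w) (hb : BorderProp ms) (hne : ms ≠ []) :
    ms.getLast hne <:+ w ∧
    (∀ s : List α, s <:+ w → IsInvLyndon s → s.length ≤ (ms.getLast hne).length) := by
  obtain ⟨-, rfl, hinv, hch⟩ := hf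
  exact ⟨getLast_suffix_flatten ms hne, fun s hs hs_inv =>
    (suffix_getLast_of_isInvLyndon_suffix_flatten ms hne hinv hch hb s hs hs_inv).length_le⟩

theorem stmt13 (w : List α) (hw : w ≠ []) (ms : List (List α))
    (hf : IsInvLyndonFact ms w) (hb : BorderProp ms) (hne : ms ≠ []) :
    ms.getLast hne <:+ w ∧
    (∀ s : List α, s <:+ w → IsInvLyndon s → s.length ≤ (ms.getLast hne).length) :=
  stmt13_general w ms hf hb hne
end

section
/- Let w be a word that is not an inverse Lyndon word, and let z be its shortest nonempty prefix that is not an inverse Lyndon word. Then z can be written z = rasrb with letters a < b and words r, s, where r is the shortest prefix of z admitting such a decomposition; moreover in this decomposition the word rb is an inverse Lyndon word. -/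
open List

variable {α : Type*} [LinearOrder α]

/-!
Call a suffix `u` of `z` bad if `z ≺ u`. If every nonempty proper prefix of `z` is inverse Lyndon,
the first mismatch between `z` and a bad suffix `u` must sit at the last letter of `u`, so
`u = r b` with `r a` a prefix of `z` and `a < b`. For a shortest bad suffix `r b`, the prefix `r a`
cannot overlap it (otherwise a shorter bad suffix appears), which gives `z = r a s r b`; conversely
every such decomposition makes `r b` a bad suffix, so `r` is shortest. Finally every proper suffix
`t` of a shortest bad suffix satisfies `t ≺ z`, and as `|t| ≤ |r|` this comparison is already
decided inside the prefix `r`, whence `t ≺ r b`.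
-/

namespace List.Lex

variable {β : Type*} {R : β → β → Prop}

theorem of_append_singleton_prefix {x p : List β} {a b : β} (h : p ++ [a] <+: x) (hab : R a b) :
    List.Lex R x (p ++ [b]) := by
  obtain ⟨s, rfl⟩ := h
  simpa using List.Lex.append_left R (List.Lex.rel hab : List.Lex R (a :: s) [b]) p

theorem isPrefix_or_exists {x y : List β} (h : List.Lex R x y) :
    (x <+: y ∧ x.length < y.length) ∨ ∃ p a b, R a b ∧ p ++ [a] <+: x ∧ p ++ [b] <+: y := by
  induction h with
  | nil => exact Or.inl ⟨nil_prefix, by simp⟩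
  | @rel a _ b _ hab => exact Or.inr ⟨[], a, b, hab, by simp, by simp⟩
  | @cons c _ _ _ ih =>
    rcases ih with ⟨hpre, hlen⟩ | ⟨p, a, b, hab, hpa, hpb⟩
    · exact Or.inl ⟨(prefix_cons_inj c).2 hpre, by simpa using hlen⟩
    · exact Or.inr ⟨c :: p, a, b, hab, by simpa using hpa, by simpa using hpb⟩

theorem of_append_of_length_le {t p v v' : List β} (h : List.Lex R t (p ++ v))
    (hlen : t.length ≤ p.length) (hv' : v' ≠ []) : List.Lex R t (p ++ v') := by
  induction p generalizing t with
  | nil =>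
    obtain rfl : t = [] := by simpa using hlen
    obtain ⟨c, v'', rfl⟩ := exists_cons_of_ne_nil hv'
    exact List.Lex.nil
  | cons c p ih =>
    cases t with
    | nil => exact List.Lex.nil
    | cons d t =>
      cases h with
      | rel hdc => exact List.Lex.rel hdc
      | cons h => exact (ih h (by simpa using hlen)).cons

end List.Lex

section InvLyndon

variable {z u p r s : List α} {a b : α}

theorem prec_iff_lt {x y : List α} : Prec x y ↔ x < y := Iff.rfl

theorem exists_suffix_prec_of_not_isInvLyndon (hz : z ≠ []) (h : ¬ IsInvLyndon z) :
    ∃ u, u <:+ z ∧ Prec z u := by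
  simp only [IsInvLyndon, hz, ne_eq, not_false_eq_true, true_and, not_forall] at h
  obtain ⟨u, hu, hne, -, hnot⟩ := h
  exact ⟨u, hu, (lt_or_gt_of_ne hne).resolve_left hnot⟩

theorem suffix_prec_of_eq_append (hab : a < b) (hz : z = r ++ [a] ++ s ++ r ++ [b]) :
    r ++ [b] <:+ z ∧ Prec z (r ++ [b]) := by
  subst hz
  exact ⟨⟨r ++ [a] ++ s, by simp⟩, List.Lex.of_append_singleton_prefix ⟨s ++ r ++ [b], by simp⟩ hab⟩

theorem exists_eq_append_singleton_of_suffix_prec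
    (hpre : ∀ y, y <+: z → y ≠ z → y ≠ [] → IsInvLyndon y) (hu : u <:+ z) (hzu : Prec z u) :
    ∃ p a b, a < b ∧ p ++ [a] <+: z ∧ u = p ++ [b] := by
  obtain ⟨x, rfl⟩ := hu
  rcases List.Lex.isPrefix_or_exists hzu with ⟨-, hlen⟩ | ⟨p, a, b, hab, hpa, ⟨t, rfl⟩⟩
  · simp at hlen
  refine ⟨p, a, b, hab, hpa, ?_⟩
  by_contra ht
  have ht : t ≠ [] := by rintro rfl; simp at ht
  have hx : x ≠ [] := by rintro rfl; exact lt_irrefl _ (prec_iff_lt.1 hzu)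
  -- `x p b` is a proper prefix of `z`, hence inverse Lyndon, yet it begins with `p a`
  have hy : x ++ (p ++ [b]) <+: x ++ (p ++ [b] ++ t) := by simp
  have hlt : Prec (p ++ [b]) (x ++ (p ++ [b])) :=
    (hpre _ hy (by simpa using ht) (by simp)).2 _ (suffix_append _ _) (by simpa using hx) (by simp)
  have hgt : Prec (x ++ (p ++ [b])) (p ++ [b]) :=
    List.Lex.of_append_singleton_prefix (prefix_of_prefix_length_le hpa hy (by simp)) hab
  exact lt_asymm (prec_iff_lt.1 hlt) (prec_iff_lt.1 hgt)

theorem exists_eq_append_of_shortest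
    (hmin : ∀ v, v <:+ z → Prec z v → (p ++ [b]).length ≤ v.length)
    (hab : a < b) (hpa : p ++ [a] <+: z) (hpb : p ++ [b] <:+ z) :
    ∃ s, z = p ++ [a] ++ s ++ p ++ [b] := by
  obtain ⟨x, rfl⟩ := hpb
  have hx : x ≠ [] := by
    rintro rfl
    exact lt_irrefl _ (prec_iff_lt.1 (List.Lex.of_append_singleton_prefix hpa hab))
  have hxz : x <+: x ++ (p ++ [b]) := prefix_append _ _
  have hfit : p.length < x.length := by
    by_contra! hle
    obtain ⟨q, rfl⟩ := prefix_of_prefix_length_le hxz ((prefix_append _ _).trans hpa) hle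
    -- then `q b` is a bad suffix shorter than `p b`
    have hqa : q ++ [a] <+: x ++ q := by
      have hqa' : q ++ [a] <+: x ++ q ++ [b] := by simpa using hpa
      refine prefix_of_prefix_length_le hqa' (prefix_append _ _) ?_
      simp [length_pos_iff.mpr hx]
    have hshort := hmin (q ++ [b]) ⟨x ++ x, by simp⟩
      (List.Lex.of_append_singleton_prefix (hqa.trans ((prefix_append _ _).trans hpa)) hab)
    exact hx (by simpa using hshort)
  obtain ⟨s, rfl⟩ := prefix_of_prefix_length_le hpa hxz (by simpa using hfit)
  exact ⟨s, by simp⟩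

theorem isInvLyndon_of_shortest
    (hmin : ∀ v, v <:+ z → Prec z v → (r ++ [b]).length ≤ v.length)
    (hrb : r ++ [b] <:+ z) (hr : r <+: z) : IsInvLyndon (r ++ [b]) := by
  refine ⟨by simp, fun t ht hne _ => ?_⟩
  have hlt : t.length < (r ++ [b]).length :=
    lt_of_le_of_ne ht.length_le fun h => hne (ht.eq_of_length h)
  have htz : t < z := by
    refine lt_of_le_of_ne (not_lt.1 fun hzt => ?_) ?_
    · exact (hmin t (ht.trans hrb) hzt).not_gt hlt
    · rintro rfl
      exact hrb.length_le.not_gt hlt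
  obtain ⟨v, rfl⟩ := hr
  exact List.Lex.of_append_of_length_le htz (by simpa [Nat.lt_succ_iff] using hlt) (by simp)

end InvLyndon

theorem stmt14_general (w z : List α) (hz : z <+: w) (hzne : z ≠ []) (hzn : ¬ IsInvLyndon z)
    (hmin : ∀ p : List α, p <+: w → p ≠ [] → ¬ IsInvLyndon p → z.length ≤ p.length) :
    ∃ (r s : List α) (a b : α), a < b ∧
      z = r ++ [a] ++ s ++ r ++ [b] ∧
      (∀ (r' s' : List α) (a' b' : α), a' < b' →
        z = r' ++ [a'] ++ s' ++ r' ++ [b'] → r.length ≤ r'.length) ∧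
      IsInvLyndon (r ++ [b]) := by
  have hpre : ∀ y, y <+: z → y ≠ z → y ≠ [] → IsInvLyndon y := fun y hy hne hnil =>
    by_contra fun h => hne (hy.eq_of_length_le (hmin y (hy.trans hz) hnil h))
  obtain ⟨u, hu⟩ := exists_suffix_prec_of_not_isInvLyndon hzne hzn
  obtain ⟨u₀, ⟨hu₀, hzu₀⟩, hmin₀⟩ :=
    (measure List.length).wf.has_min {u : List α | u <:+ z ∧ Prec z u} ⟨u, hu⟩
  have hshortest : ∀ v, v <:+ z → Prec z v → u₀.length ≤ v.length :=
    fun v hv hzv => not_lt.1 (hmin₀ v ⟨hv, hzv⟩)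
  obtain ⟨r, a, b, hab, hra, rfl⟩ := exists_eq_append_singleton_of_suffix_prec hpre hu₀ hzu₀
  obtain ⟨s, hs⟩ := exists_eq_append_of_shortest hshortest hab hra hu₀
  refine ⟨r, s, a, b, hab, hs, fun r' s' a' b' hab' hz' => ?_,
    isInvLyndon_of_shortest hshortest hu₀ ((prefix_append r [a]).trans hra)⟩
  obtain ⟨hsuf, hprec⟩ := suffix_prec_of_eq_append hab' hz'
  simpa using hshortest _ hsuf hprec

theorem stmt14 (w z : List α) (hw : w ≠ []) (hwn : ¬ IsInvLyndon w)
    (hz : z <+: w) (hzne : z ≠ []) (hzn : ¬ IsInvLyndon z)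
    (hmin : ∀ p : List α, p <+: w → p ≠ [] → ¬ IsInvLyndon p → z.length ≤ p.length) :
    ∃ (r s : List α) (a b : α), a < b ∧
      z = r ++ [a] ++ s ++ r ++ [b] ∧
      (∀ (r' s' : List α) (a' b' : α), a' < b' →
        z = r' ++ [a'] ++ s' ++ r' ++ [b'] → r.length ≤ r'.length) ∧
      IsInvLyndon (r ++ [b]) :=
  stmt14_general w z hz hzne hzn hmin
end

section
/- Let x be a nonempty word and w = x^n p a sesquipower of x (p a proper prefix of x, n ≥ 1), where x is a Lyndon word with respect to the inverse lexicographic order (anti-Lyndon). Then w is an inverse Lyndon word. -/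
open List

variable {α : Type*} [LinearOrder α]

/-
Write `x = p ++ q`, so that `w ++ q = x^(n+1)`. A nonempty proper suffix `s` of `w` then
extends to the suffix `s ++ q = v ++ x^j` of `x^(n+1)`, with `v` a proper suffix of `x`.
If `v = []`, then `s` is a prefix of `x^(n+1)` shorter than `w`, hence a proper prefix of `w`.
Otherwise `x ≺_in v` with `v` shorter than `x` means that `v` differs from `x` at some
position where its letter is the smaller one. As `w` starts with `x`, this mismatch gives
`s ++ q ≺ w`, and `s ≺ w` follows.
-/

lemma prec_of_prefix {s w : List α} (h : s <+: w) (hne : s ≠ w) : Prec s w := by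
  obtain ⟨_ | ⟨a, t⟩, rfl⟩ := h
  · exact absurd (append_nil s).symm hne
  · have h := Lex.append_left (· < ·) (Lex.nil (a := a) (l := t)) s
    rwa [append_nil] at h

lemma Prec.of_prefix_left {s u w : List α} (h : Prec u w) (hs : s <+: u) : Prec s w := by
  induction h generalizing s with
  | nil => rw [prefix_nil.mp hs]; exact Lex.nil
  | @cons a u w _ ih =>
    rcases s with _ | ⟨b, s⟩
    · exact Lex.nil
    · obtain ⟨rfl, hsu⟩ := cons_prefix_cons.mp hs
      exact Lex.cons (ih hsu)
  | rel hab =>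
    rcases s with _ | ⟨b, s⟩
    · exact Lex.nil
    · obtain ⟨rfl, -⟩ := cons_prefix_cons.mp hs
      exact Lex.rel hab

lemma prec_append_of_precIn {x v : List α} (h : PrecIn x v) (hl : v.length < x.length)
    (r t : List α) : Prec (v ++ r) (x ++ t) := by
  induction h with
  | nil => simp at hl
  | cons _ ih => exact Lex.cons (ih (by simpa using hl))
  | rel hba => exact Lex.rel hba

lemma IsAntiLyndon.prec_append {x v : List α} (hx : IsAntiLyndon x) (hv : v <:+ x)
    (hvx : v ≠ x) (hv₀ : v ≠ []) (r t : List α) : Prec (v ++ r) (x ++ t) :=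
  prec_append_of_precIn (hx.2 v hv hvx hv₀)
    (lt_of_le_of_ne hv.length_le fun h => hvx (hv.eq_of_length h)) r t

lemma flatten_replicate_prefix {β : Type*} {x : List β} {j n : ℕ} (h : j ≤ n) :
    (replicate j x).flatten <+: (replicate n x).flatten := by
  obtain ⟨k, rfl⟩ := Nat.exists_eq_add_of_le h
  rw [replicate_add, flatten_append]
  exact prefix_append _ _

lemma flatten_replicate_succ {β : Type*} (x : List β) (n : ℕ) :
    (replicate (n + 1) x).flatten = (replicate n x).flatten ++ x := by
  rw [replicate_succ', flatten_append, flatten_singleton]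

lemma exists_eq_append_of_suffix_flatten_replicate {β : Type*} {x u : List β} (hx : x ≠ [])
    {n : ℕ} (hu : u <:+ (replicate n x).flatten) :
    ∃ v j, v <:+ x ∧ v ≠ x ∧ j ≤ n ∧ u = v ++ (replicate j x).flatten := by
  induction n generalizing u with
  | zero =>
    rw [replicate_zero, flatten_nil, suffix_nil] at hu
    exact ⟨[], 0, nil_suffix, hx.symm, le_rfl, by simp [hu]⟩
  | succ m ih =>
    obtain ⟨t, ht⟩ := hu
    rw [replicate_succ, flatten_cons] at ht
    rcases append_eq_append_iff.mp ht with ⟨v, hxv, rfl⟩ | ⟨c, -, hc⟩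
    · by_cases hv : v = x
      · exact ⟨[], m + 1, nil_suffix, hx.symm, le_rfl, by simp [hv, replicate_succ]⟩
      · exact ⟨v, m, ⟨t, hxv.symm⟩, hv, m.le_succ, rfl⟩
    · obtain ⟨v, j, hv, hvx, hj, rfl⟩ := ih ⟨c, hc.symm⟩
      exact ⟨v, j, hv, hvx, hj.trans m.le_succ, rfl⟩

theorem stmt18_general (x p : List α) (n : ℕ) (hn : 1 ≤ n)
    (hx : IsAntiLyndon x) (hp : p <+: x) :
    IsInvLyndon ((List.replicate n x).flatten ++ p) := by
  obtain ⟨q, hq⟩ := hp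
  obtain ⟨m, rfl⟩ := Nat.exists_eq_add_of_le' hn
  have hw_cons : (replicate (m + 1) x).flatten ++ p
      = x ++ ((replicate m x).flatten ++ p) := by
    rw [replicate_succ, flatten_cons, append_assoc]
  have hw_pow : (replicate (m + 1) x).flatten ++ p ++ q = (replicate (m + 2) x).flatten := by
    rw [append_assoc, hq, ← flatten_replicate_succ]
  refine ⟨by simp [hw_cons, hx.1], fun s hs hsw _ => ?_⟩
  have hsq : s ++ q <:+ (replicate (m + 2) x).flatten := by
    obtain ⟨t, ht⟩ := hs
    exact ⟨t, by rw [← hw_pow, ← ht, append_assoc]⟩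
  obtain ⟨v, j, hv, hvx, hj, hsv⟩ := exists_eq_append_of_suffix_flatten_replicate hx.1 hsq
  rcases eq_or_ne v [] with rfl | hv₀
  · refine prec_of_prefix (prefix_of_prefix_length_le
      (l₃ := (replicate (m + 2) x).flatten) ?_ ?_ hs.length_le) hsw
    · exact (prefix_append s q).trans (hsv ▸ flatten_replicate_prefix hj)
    · exact hw_pow ▸ prefix_append _ q
  · have hsq_prec : Prec (s ++ q) ((replicate (m + 1) x).flatten ++ p) :=
      hsv ▸ hw_cons ▸ hx.prec_append hv hvx hv₀ _ _
    exact hsq_prec.of_prefix_left (prefix_append s q)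

theorem stmt18 (x p : List α) (n : ℕ) (hn : 1 ≤ n)
    (hx : IsAntiLyndon x) (hp : p <+: x) (hpx : p ≠ x) :
    IsInvLyndon ((List.replicate n x).flatten ++ p) :=
  stmt18_general x p n hn hx hp
end
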